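/- arXiv:2512.17524 — 2 statements merged into one kernel-verified Lean document; each statement's English description precedes it below -/
import Mathlib

section
/- There exists a constant C > 0 such that for all λ ≥ 1, one has 1 - H(λ) ≤ C e^{-λ²/2}/λ, where H(λ) = 1 - 3Φ(-λ) + e^{4λ²}Φ(-3λ) and Φ is the standard Gaussian CDF. -/
open MeasureTheory

/-- The standard Gaussian cumulative distribution function. -/
noncomputable def stdGaussianCDF (z : ℝ) : ℝ :=
  (Real.sqrt (2 * Real.pi))⁻¹ * ∫ u in Set.Iic z, Real.exp (-u ^ 2 / 2)

lemma gauss_integrable : Integrable (fun u : ℝ => Real.exp (-u ^ 2 / 2)) := by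
  have := integrable_exp_neg_mul_sq (by norm_num : (0:ℝ) < 1/2)
  convert this using 2 with u
  ring_nf

lemma gauss_deriv (u : ℝ) :
    HasDerivAt (fun u : ℝ => Real.exp (-u ^ 2 / 2)) (-u * Real.exp (-u ^ 2 / 2)) u := by
  have h : HasDerivAt (fun u : ℝ => -u ^ 2 / 2) (-u) u := by
    have := ((hasDerivAt_pow 2 u).neg).div_const 2
    simpa using this.congr_deriv (by ring)
  simpa [mul_comm] using h.exp

lemma mul_gauss_integrable : Integrable (fun u : ℝ => -u * Real.exp (-u ^ 2 / 2)) := by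
  have h := (integrable_mul_exp_neg_mul_sq (by norm_num : (0:ℝ) < 1/2)).neg
  refine h.congr (Filter.Eventually.of_forall fun u => ?_)
  simp only [Pi.neg_apply, neg_mul]
  congr 2
  ring

lemma key_integral (a : ℝ) :
    ∫ u in Set.Iic (-a), -u * Real.exp (-u ^ 2 / 2) = Real.exp (-a ^ 2 / 2) := by
  have h := integral_Iic_of_hasDerivAt_of_tendsto' (a := -a) (m := 0)
    (f := fun u : ℝ => Real.exp (-u ^ 2 / 2))
    (f' := fun u : ℝ => -u * Real.exp (-u ^ 2 / 2))
    (fun x _ => gauss_deriv x) mul_gauss_integrable.integrableOn ?_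
  · simpa using h
  · have hsq : Filter.Tendsto (fun u : ℝ => u ^ 2) Filter.atBot Filter.atTop := by
      refine Filter.tendsto_atTop_mono' Filter.atBot
        (f₁ := fun u : ℝ => -u) ?_ Filter.tendsto_neg_atBot_atTop
      filter_upwards [Filter.eventually_le_atBot (-1 : ℝ)] with x hx
      nlinarith
    have harg : Filter.Tendsto (fun u : ℝ => -u ^ 2 / 2) Filter.atBot Filter.atBot := by
      have h2 : Filter.Tendsto (fun u : ℝ => u ^ 2 / 2) Filter.atBot Filter.atTop :=
        hsq.atTop_div_const (by norm_num)
      exact (Filter.tendsto_neg_atBot_iff.2 h2).congr fun x => by ring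
    have := Real.tendsto_exp_atBot.comp harg
    exact Real.tendsto_exp_atBot.comp harg

lemma tail_bound {a : ℝ} (ha : 1 ≤ a) :
    ∫ u in Set.Iic (-a), Real.exp (-u ^ 2 / 2) ≤ Real.exp (-a ^ 2 / 2) / a := by
  have ha0 : 0 < a := lt_of_lt_of_le one_pos ha
  have hmono : ∫ u in Set.Iic (-a), Real.exp (-u ^ 2 / 2)
      ≤ ∫ u in Set.Iic (-a), (-u / a) * Real.exp (-u ^ 2 / 2) := by
    apply setIntegral_mono_on gauss_integrable.integrableOn
      ((mul_gauss_integrable.div_const a).integrableOn.congr_fun ?_ measurableSet_Iic)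
      measurableSet_Iic
    · intro u hu
      have hu' : u ≤ -a := hu
      have h1 : 1 ≤ -u / a := (le_div_iff₀ ha0).2 (by linarith)
      nlinarith [Real.exp_pos (-u ^ 2 / 2), h1]
    · intro u _
      simp only
      ring
  calc ∫ u in Set.Iic (-a), Real.exp (-u ^ 2 / 2)
      ≤ ∫ u in Set.Iic (-a), (-u / a) * Real.exp (-u ^ 2 / 2) := hmono
    _ = (∫ u in Set.Iic (-a), -u * Real.exp (-u ^ 2 / 2)) / a := by
        rw [← integral_div]; congr 1 with u; ring
    _ = Real.exp (-a ^ 2 / 2) / a := by rw [key_integral]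

/-- There is `C > 0` such that for all `λ ≥ 1`,
`1 - H(λ) ≤ C e^{-λ²/2}/λ`, where `H(λ) = 1 - 3Φ(-λ) + e^{4λ²}Φ(-3λ)`. -/
theorem stmt_3 :
    ∃ C : ℝ, 0 < C ∧ ∀ lam : ℝ, 1 ≤ lam →
      1 - (1 - 3 * stdGaussianCDF (-lam) +
            Real.exp (4 * lam ^ 2) * stdGaussianCDF (-3 * lam)) ≤
        C * Real.exp (-lam ^ 2 / 2) / lam := by
  refine ⟨3, by norm_num, fun lam hlam => ?_⟩
  have hlam0 : 0 < lam := lt_of_lt_of_le one_pos hlam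
  have hsqrt : 1 ≤ Real.sqrt (2 * Real.pi) := by
    rw [show (1:ℝ) = Real.sqrt 1 by simp]
    exact Real.sqrt_le_sqrt (by nlinarith [Real.pi_gt_three])
  have hΦ : stdGaussianCDF (-lam) ≤ Real.exp (-lam ^ 2 / 2) / lam := by
    unfold stdGaussianCDF
    have h1 := tail_bound hlam
    have h2 : (Real.sqrt (2 * Real.pi))⁻¹ ≤ 1 := inv_le_one_of_one_le₀ hsqrt
    have h3 : 0 ≤ ∫ u in Set.Iic (-lam), Real.exp (-u ^ 2 / 2) :=
      integral_nonneg fun u => (Real.exp_pos _).le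
    calc (Real.sqrt (2 * Real.pi))⁻¹ * ∫ u in Set.Iic (-lam), Real.exp (-u ^ 2 / 2)
        ≤ 1 * ∫ u in Set.Iic (-lam), Real.exp (-u ^ 2 / 2) := by
          exact mul_le_mul_of_nonneg_right h2 h3
      _ ≤ Real.exp (-lam ^ 2 / 2) / lam := by rw [one_mul]; exact h1
  have hΦ3 : 0 ≤ stdGaussianCDF (-3 * lam) := by
    unfold stdGaussianCDF
    apply mul_nonneg (inv_nonneg.2 (Real.sqrt_nonneg _))
    exact integral_nonneg fun u => (Real.exp_pos _).le
  have hexp : 0 < Real.exp (4 * lam ^ 2) := Real.exp_pos _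
  have : 1 - (1 - 3 * stdGaussianCDF (-lam) +
      Real.exp (4 * lam ^ 2) * stdGaussianCDF (-3 * lam)) ≤ 3 * stdGaussianCDF (-lam) := by
    nlinarith
  calc _ ≤ 3 * stdGaussianCDF (-lam) := this
    _ ≤ 3 * (Real.exp (-lam ^ 2 / 2) / lam) := by linarith
    _ = 3 * Real.exp (-lam ^ 2 / 2) / lam := by ring
end

section
/- Let 0 < η < 1 and β ≥ 0 satisfy β/(1-η) < d. Then for every t ∈ (0,∞)^d with coordinates t₁ ≤ ⋯ ≤ t_i < 1 ≤ t_{i+1} ≤ ⋯ ≤ t_d, one has ∫_{[-t,t] ∩ B(0,1)} ‖x‖^{-β} dx ≤ C (∏_{j=1}^i t_j)^η, where C depends only on d, β, η, and [-t,t] = ∏_ℓ [-t_ℓ, t_ℓ]. -/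
open MeasureTheory

section Aux

open Metric Set ENNReal

private lemma stmt8_coord {d : ℕ} (x : EuclideanSpace ℝ (Fin d)) (ℓ : Fin d) : |x ℓ| ≤ ‖x‖ := by
  rw [EuclideanSpace.norm_eq, ← Real.sqrt_sq_eq_abs]
  apply Real.sqrt_le_sqrt
  calc x ℓ ^ 2 = ‖x ℓ‖ ^ 2 := by rw [Real.norm_eq_abs, sq_abs]
    _ ≤ ∑ j, ‖x j‖ ^ 2 :=
      Finset.single_le_sum (f := fun j => ‖x j‖ ^ 2) (fun j _ => by positivity) (Finset.mem_univ ℓ)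

private lemma stmt8_box_volume {d : ℕ} (m : Fin d → ℝ) (hm : ∀ ℓ, 0 ≤ m ℓ) :
    volume {x : EuclideanSpace ℝ (Fin d) | ∀ ℓ, |x ℓ| ≤ m ℓ} = ENNReal.ofReal (∏ ℓ, (2 * m ℓ)) := by
  have hpre : {x : EuclideanSpace ℝ (Fin d) | ∀ ℓ, |x ℓ| ≤ m ℓ}
      = (MeasurableEquiv.toLp 2 (Fin d → ℝ)).symm ⁻¹' (Set.pi univ fun ℓ => Icc (-(m ℓ)) (m ℓ)) := by
    ext x
    simp only [Set.mem_setOf_eq, Set.mem_preimage, Set.mem_pi, Set.mem_univ, forall_true_left,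
      Set.mem_Icc, abs_le, forall_const]
    rfl
  rw [hpre, (EuclideanSpace.volume_preserving_symm_measurableEquiv_toLp (Fin d)).measure_preimage
      (MeasurableSet.univ_pi fun ℓ => measurableSet_Icc).nullMeasurableSet,
    volume_pi_pi]
  simp only [Real.volume_Icc]
  rw [← ENNReal.ofReal_prod_of_nonneg (fun ℓ _ => by linarith [hm ℓ])]
  congr 1
  exact Finset.prod_congr rfl fun ℓ _ => by ring

private lemma stmt8_box_measurable {d : ℕ} (t : Fin d → ℝ) :
    MeasurableSet {x : EuclideanSpace ℝ (Fin d) | ∀ ℓ, |x ℓ| ≤ t ℓ} := by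
  have : {x : EuclideanSpace ℝ (Fin d) | ∀ ℓ, |x ℓ| ≤ t ℓ} = ⋂ ℓ, {x | |x ℓ| ≤ t ℓ} := by
    ext x; simp
  rw [this]
  exact MeasurableSet.iInter fun ℓ => measurableSet_le (by fun_prop) measurable_const

private lemma stmt8_annulus (d : ℕ) (hd : 0 < d) (β : ℝ) (hβ0 : 0 ≤ β) (hβd : β < d) :
    ∃ S : ℝ≥0∞, S ≠ ⊤ ∧ ∀ r : ℝ, 0 < r →
      ∫⁻ x in Metric.ball (0 : EuclideanSpace ℝ (Fin d)) r, ENNReal.ofReal (‖x‖ ^ (-β)) ∂volume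
        ≤ ENNReal.ofReal (r ^ ((d : ℝ) - β)) * S := by
  set X := EuclideanSpace ℝ (Fin d)
  haveI : Nonempty (Fin d) := ⟨⟨0, hd⟩⟩
  haveI : Nontrivial X := by
    unfold X
    infer_instance
  set ω : ℝ≥0∞ := volume (Metric.ball (0 : X) 1) with hω
  have hωtop : ω ≠ ⊤ := measure_ball_lt_top.ne
  have hδ : (0:ℝ) < (d : ℝ) - β := by linarith
  set q : ℝ≥0∞ := ENNReal.ofReal ((2:ℝ) ^ (-((d:ℝ) - β))) with hq
  have hq1 : q < 1 := by
    rw [hq, ← ENNReal.ofReal_one]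
    exact ENNReal.ofReal_lt_ofReal_iff_of_nonneg (by positivity) |>.mpr
      (Real.rpow_lt_one_of_one_lt_of_neg one_lt_two (by linarith))
  refine ⟨ENNReal.ofReal ((2:ℝ) ^ β) * ω * (1 - q)⁻¹, ?_, ?_⟩
  · refine ENNReal.mul_ne_top (ENNReal.mul_ne_top ENNReal.ofReal_ne_top hωtop) ?_
    simp only [ne_eq, ENNReal.inv_eq_top, tsub_eq_zero_iff_le, not_le]
    exact hq1
  intro r hr
  set A : ℕ → Set X := fun k => Metric.ball (0:X) (r * 2⁻¹ ^ k) \ Metric.ball (0:X) (r * 2⁻¹ ^ (k+1)) with hA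
  have hcov : Metric.ball (0:X) r \ {0} ⊆ ⋃ k, A k := by
    intro x hx
    have hx0 : 0 < ‖x‖ := by
      exact norm_pos_iff.mpr (by simpa using hx.2)
    have hxr : ‖x‖ < r := by simpa using hx.1
    have hex : ∃ n : ℕ, r * 2⁻¹ ^ (n+1) ≤ ‖x‖ := by
      obtain ⟨n, hn⟩ := exists_pow_lt_of_lt_one (div_pos hx0 hr) (by norm_num : (2:ℝ)⁻¹ < 1)
      refine ⟨n, ?_⟩
      have h1 : (2:ℝ)⁻¹ ^ (n+1) ≤ 2⁻¹ ^ n := pow_le_pow_of_le_one (by norm_num) (by norm_num) (by omega)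
      have h2 := h1.trans hn.le
      rw [le_div_iff₀ hr] at h2
      linarith
    classical
    let k := Nat.find hex
    refine Set.mem_iUnion.2 ⟨k, ?_, ?_⟩
    · simp only [Metric.mem_ball, dist_zero_right]
      rcases Nat.eq_zero_or_pos k with hk | hk
      · simpa [hk] using hxr
      · have hmin := Nat.find_min hex (m := k - 1) (by omega)
        push_neg at hmin
        have hk1 : k - 1 + 1 = k := by omega
        rw [hk1] at hmin
        exact hmin
    · simp only [Metric.mem_ball, dist_zero_right, not_lt]
      exact Nat.find_spec hex
  have hAk : ∀ k : ℕ, ∫⁻ x in A k, ENNReal.ofReal (‖x‖ ^ (-β)) ∂volume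
      ≤ ENNReal.ofReal (r ^ ((d:ℝ) - β)) * (ENNReal.ofReal ((2:ℝ) ^ β) * ω * q ^ k) := by
    intro k
    have hAmeas : MeasurableSet (A k) := measurableSet_ball.diff measurableSet_ball
    have hrk : (0:ℝ) < r * 2⁻¹ ^ (k+1) := by positivity
    have hbound : ∀ x ∈ A k, ENNReal.ofReal (‖x‖ ^ (-β))
        ≤ ENNReal.ofReal ((r * 2⁻¹ ^ (k+1)) ^ (-β)) := by
      intro x hx
      have hxk : r * 2⁻¹ ^ (k+1) ≤ ‖x‖ := by
        have := hx.2; simp only [Metric.mem_ball, dist_zero_right, not_lt] at this; exact this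
      apply ENNReal.ofReal_le_ofReal
      rw [Real.rpow_neg (by positivity), Real.rpow_neg hrk.le]
      exact inv_anti₀ (Real.rpow_pos_of_pos hrk β) (Real.rpow_le_rpow hrk.le hxk hβ0)
    have key : (r * 2⁻¹ ^ (k+1)) ^ (-β) * (r * 2⁻¹ ^ k) ^ (d:ℝ)
        = r ^ ((d:ℝ) - β) * ((2:ℝ) ^ β * ((2:ℝ) ^ (-((d:ℝ)-β))) ^ k) := by
      have h2 : ∀ n : ℕ, (2:ℝ)⁻¹ ^ n = (2:ℝ) ^ (-(n:ℝ)) := by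
        intro n
        rw [← Real.rpow_natCast (2:ℝ)⁻¹ n, Real.inv_rpow (by norm_num), ← Real.rpow_neg (by norm_num)]
      rw [h2, h2, Real.mul_rpow hr.le (Real.rpow_nonneg (by norm_num) _),
          Real.mul_rpow hr.le (Real.rpow_nonneg (by norm_num) _),
          ← Real.rpow_natCast ((2:ℝ) ^ (-((d:ℝ)-β))) k,
          ← Real.rpow_mul (by norm_num : (0:ℝ) ≤ 2),
          ← Real.rpow_mul (by norm_num : (0:ℝ) ≤ 2),
          ← Real.rpow_mul (by norm_num : (0:ℝ) ≤ 2),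
          show r ^ (-β) * (2:ℝ) ^ (-((k+1:ℕ):ℝ) * -β) * (r ^ ((d:ℝ)) * (2:ℝ) ^ (-(k:ℝ) * (d:ℝ)))
              = (r ^ (-β) * r ^ ((d:ℝ))) * ((2:ℝ) ^ (-((k+1:ℕ):ℝ) * -β) * (2:ℝ) ^ (-(k:ℝ) * (d:ℝ)))
            from by ring,
          ← Real.rpow_add hr, ← Real.rpow_add (by norm_num : (0:ℝ) < 2),
          ← Real.rpow_add (by norm_num : (0:ℝ) < 2)]
      congr 1
      · ring
      · push_cast; ring
    calc ∫⁻ x in A k, ENNReal.ofReal (‖x‖ ^ (-β)) ∂volume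
        ≤ ∫⁻ _x in A k, ENNReal.ofReal ((r * 2⁻¹ ^ (k+1)) ^ (-β)) ∂volume :=
          setLIntegral_mono' hAmeas hbound
      _ = ENNReal.ofReal ((r * 2⁻¹ ^ (k+1)) ^ (-β)) * volume (A k) := by
          rw [setLIntegral_const]
      _ ≤ ENNReal.ofReal ((r * 2⁻¹ ^ (k+1)) ^ (-β)) * volume (Metric.ball (0:X) (r * 2⁻¹ ^ k)) := by
          gcongr
          exact diff_subset
      _ = ENNReal.ofReal ((r * 2⁻¹ ^ (k+1)) ^ (-β)) * (ENNReal.ofReal ((r * 2⁻¹ ^ k) ^ (d:ℝ)) * ω) := by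
          rw [Measure.addHaar_ball _ _ (by positivity : (0:ℝ) ≤ r * 2⁻¹ ^ k)]
          rw [show Module.finrank ℝ X = d from finrank_euclideanSpace_fin,
              ← Real.rpow_natCast (r * 2⁻¹ ^ k) d]
      _ = ENNReal.ofReal (r ^ ((d:ℝ) - β)) * (ENNReal.ofReal ((2:ℝ) ^ β) * ω * q ^ k) := by
          rw [← mul_assoc, ← ENNReal.ofReal_mul (Real.rpow_nonneg hrk.le _), key,
              ENNReal.ofReal_mul (Real.rpow_nonneg hr.le _), hq,
              ← ENNReal.ofReal_pow (Real.rpow_nonneg (by norm_num) _),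
              ENNReal.ofReal_mul (Real.rpow_nonneg (by norm_num) _)]
          ring
  calc ∫⁻ x in Metric.ball (0:X) r, ENNReal.ofReal (‖x‖ ^ (-β)) ∂volume
      ≤ ∫⁻ x in (Metric.ball (0:X) r \ {0}) ∪ {0}, ENNReal.ofReal (‖x‖ ^ (-β)) ∂volume := by
        apply lintegral_mono_set
        intro x hx
        by_cases h : x = 0
        · exact Or.inr (by simp [h])
        · exact Or.inl ⟨hx, h⟩
    _ ≤ (∫⁻ x in Metric.ball (0:X) r \ {0}, ENNReal.ofReal (‖x‖ ^ (-β)) ∂volume)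
        + ∫⁻ x in ({0} : Set X), ENNReal.ofReal (‖x‖ ^ (-β)) ∂volume := lintegral_union_le _ _ _
    _ = ∫⁻ x in Metric.ball (0:X) r \ {0}, ENNReal.ofReal (‖x‖ ^ (-β)) ∂volume := by
        rw [setLIntegral_measure_zero _ _ (measure_singleton 0), add_zero]
    _ ≤ ∫⁻ x in ⋃ k, A k, ENNReal.ofReal (‖x‖ ^ (-β)) ∂volume := lintegral_mono_set hcov
    _ ≤ ∑' k, ∫⁻ x in A k, ENNReal.ofReal (‖x‖ ^ (-β)) ∂volume := lintegral_iUnion_le _ _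
    _ ≤ ∑' k, ENNReal.ofReal (r ^ ((d:ℝ) - β)) * (ENNReal.ofReal ((2:ℝ) ^ β) * ω * q ^ k) :=
        ENNReal.tsum_le_tsum hAk
    _ = ENNReal.ofReal (r ^ ((d:ℝ) - β)) * (ENNReal.ofReal ((2:ℝ) ^ β) * ω * (1 - q)⁻¹) := by
        rw [ENNReal.tsum_mul_left]
        congr 1
        rw [ENNReal.tsum_mul_left, ENNReal.tsum_geometric]

end Aux

/-- Hölder estimate: if `0 < η < 1`, `β ≥ 0` and `β/(1-η) < d`, there is `C > 0`
(depending only on `d, β, η`) such that for every `t ∈ (0,∞)^d` with ordered coordinates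
`t₁ ≤ ⋯ ≤ t_i < 1 ≤ t_{i+1} ≤ ⋯ ≤ t_d`,
`∫_{[-t,t] ∩ B(0,1)} ‖x‖^{-β} dx ≤ C (∏_{j≤i} t_j)^η`. -/
theorem stmt_8 {d : ℕ} (hd : 0 < d) (η β : ℝ) (hη0 : 0 < η) (hη1 : η < 1)
    (hβ0 : 0 ≤ β) (hβ : β / (1 - η) < d) :
    ∃ C : ℝ, 0 < C ∧ ∀ (t : Fin d → ℝ) (i : ℕ), i ≤ d →
      (∀ j, 0 < t j) → Monotone t →
      (∀ j : Fin d, (j : ℕ) < i → t j < 1) →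
      (∀ j : Fin d, i ≤ (j : ℕ) → 1 ≤ t j) →
      ∫ x in ({x : EuclideanSpace ℝ (Fin d) | ∀ ℓ, |x ℓ| ≤ t ℓ} ∩ Metric.ball 0 1),
          ‖x‖ ^ (-β) ∂volume ≤
        C * (∏ j ∈ Finset.univ.filter fun j : Fin d => (j : ℕ) < i, t j) ^ η := by
  have h1η : (0:ℝ) < 1 - η := by linarith
  have hβd' : β < (1 - η) * d := by
    have := (div_lt_iff₀ h1η).mp hβ
    linarith
  have hβd : β < d := by nlinarith
  have hδ : (0:ℝ) < (d:ℝ) - β := by linarith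
  obtain ⟨S, hStop, hS⟩ := stmt8_annulus d hd β hβ0 hβd
  refine ⟨S.toReal + 2 ^ d, by positivity, ?_⟩
  intro t i hi ht hmono hlt hge
  set X := EuclideanSpace ℝ (Fin d)
  set P : ℝ := ∏ j ∈ Finset.univ.filter fun j : Fin d => (j : ℕ) < i, t j with hP
  have hP0 : 0 < P := Finset.prod_pos fun j _ => ht j
  have hP1 : P ≤ 1 :=
    Finset.prod_le_one (fun j _ => (ht j).le)
      (fun j hj => (hlt j (Finset.mem_filter.mp hj).2).le)
  set r : ℝ := P ^ (η / ((d:ℝ) - β)) with hrdef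
  have hr0 : 0 < r := Real.rpow_pos_of_pos hP0 _
  have hrδ : r ^ ((d:ℝ) - β) = P ^ η := by
    rw [hrdef, ← Real.rpow_mul hP0.le, div_mul_cancel₀ _ hδ.ne']
  -- the set
  set E : Set X := {x : X | ∀ ℓ, |x ℓ| ≤ t ℓ} ∩ Metric.ball 0 1 with hE
  have hEmeas : MeasurableSet E := (stmt8_box_measurable t).inter measurableSet_ball
  -- volume bound for E
  set m : Fin d → ℝ := fun ℓ => min (t ℓ) 1 with hm
  have hmnn : ∀ ℓ, 0 ≤ m ℓ := fun ℓ => le_min (ht ℓ).le zero_le_one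
  have hEsub : E ⊆ {x : X | ∀ ℓ, |x ℓ| ≤ m ℓ} := by
    intro x hx ℓ
    refine le_min (hx.1 ℓ) ?_
    have h1 : ‖x‖ ≤ 1 := le_of_lt (by simpa using hx.2)
    exact (stmt8_coord x ℓ).trans h1
  have hprodm : ∏ ℓ, (2 * m ℓ) = 2 ^ d * P := by
    rw [Finset.prod_mul_distrib, Finset.prod_const, Finset.card_univ, Fintype.card_fin]
    congr 1
    rw [← Finset.prod_filter_mul_prod_filter_not Finset.univ (fun j : Fin d => (j : ℕ) < i) m]
    have e1 : ∏ j ∈ Finset.univ.filter fun j : Fin d => (j : ℕ) < i, m j = P := by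
      rw [hP]
      exact Finset.prod_congr rfl fun j hj =>
        min_eq_left (hlt j (Finset.mem_filter.mp hj).2).le
    have e2 : ∏ j ∈ Finset.univ.filter fun j : Fin d => ¬ (j : ℕ) < i, m j = 1 := by
      apply Finset.prod_eq_one
      intro j hj
      exact min_eq_right (hge j (not_lt.mp (Finset.mem_filter.mp hj).2))
    rw [e1, e2, mul_one]
  have hEvol : volume E ≤ ENNReal.ofReal (2 ^ d * P) := by
    rw [← hprodm]
    exact (measure_mono hEsub).trans (le_of_eq (stmt8_box_volume m hmnn))
  -- key exponent inequality
  have hexp : η ≤ η / ((d:ℝ) - β) * (-β) + 1 := by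
    have h1 : η * ((d:ℝ) - β) ≤ η * (-β) + ((d:ℝ) - β) := by nlinarith
    have h2 : η ≤ (η * (-β) + ((d:ℝ) - β)) / ((d:ℝ) - β) := by
      rw [le_div_iff₀ hδ]; linarith
    have h3 : (η * (-β) + ((d:ℝ) - β)) / ((d:ℝ) - β) = η / ((d:ℝ) - β) * (-β) + 1 := by
      field_simp
    linarith [h3 ▸ h2]
  have hrβ : r ^ (-β) * (2 ^ d * P) ≤ 2 ^ d * P ^ η := by
    have e1 : r ^ (-β) = P ^ (η / ((d:ℝ) - β) * (-β)) := by
      rw [hrdef, ← Real.rpow_mul hP0.le]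
    have e2 : r ^ (-β) * P = P ^ (η / ((d:ℝ) - β) * (-β) + 1) := by
      rw [e1, Real.rpow_add hP0, Real.rpow_one]
    have e3 : P ^ (η / ((d:ℝ) - β) * (-β) + 1) ≤ P ^ η :=
      Real.rpow_le_rpow_of_exponent_ge hP0 hP1 hexp
    calc r ^ (-β) * (2 ^ d * P) = 2 ^ d * (r ^ (-β) * P) := by ring
      _ = 2 ^ d * P ^ (η / ((d:ℝ) - β) * (-β) + 1) := by rw [e2]
      _ ≤ 2 ^ d * P ^ η := by
          have : (0:ℝ) < 2 ^ d := by positivity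
          nlinarith
  -- pass to lintegral
  have hmeasf : Measurable fun x : X => ‖x‖ ^ (-β) := by fun_prop
  have hnn : 0 ≤ᵐ[volume.restrict E] fun x : X => ‖x‖ ^ (-β) :=
    Filter.Eventually.of_forall fun x => Real.rpow_nonneg (norm_nonneg x) _
  rw [integral_eq_lintegral_of_nonneg_ae hnn hmeasf.aestronglyMeasurable]
  have hlint : ∫⁻ x in E, ENNReal.ofReal (‖x‖ ^ (-β)) ∂volume
      ≤ ENNReal.ofReal ((S.toReal + 2 ^ d) * P ^ η) := by
    calc ∫⁻ x in E, ENNReal.ofReal (‖x‖ ^ (-β)) ∂volume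
        ≤ ∫⁻ x in Metric.ball (0:X) r ∪ (E \ Metric.ball (0:X) r),
            ENNReal.ofReal (‖x‖ ^ (-β)) ∂volume := by
          apply lintegral_mono_set
          intro x hx
          by_cases h : x ∈ Metric.ball (0:X) r
          · exact Or.inl h
          · exact Or.inr ⟨hx, h⟩
      _ ≤ (∫⁻ x in Metric.ball (0:X) r, ENNReal.ofReal (‖x‖ ^ (-β)) ∂volume)
          + ∫⁻ x in E \ Metric.ball (0:X) r, ENNReal.ofReal (‖x‖ ^ (-β)) ∂volume :=
          lintegral_union_le _ _ _
      _ ≤ ENNReal.ofReal (r ^ ((d:ℝ) - β)) * S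
          + ENNReal.ofReal (r ^ (-β)) * volume (E \ Metric.ball (0:X) r) := by
          gcongr
          · exact hS r hr0
          · calc ∫⁻ x in E \ Metric.ball (0:X) r, ENNReal.ofReal (‖x‖ ^ (-β)) ∂volume
                ≤ ∫⁻ _x in E \ Metric.ball (0:X) r, ENNReal.ofReal (r ^ (-β)) ∂volume := by
                  apply setLIntegral_mono' (hEmeas.diff measurableSet_ball)
                  intro x hx
                  have hxr : r ≤ ‖x‖ := by
                    have := hx.2
                    simp only [Metric.mem_ball, dist_zero_right, not_lt] at this
                    exact this
                  apply ENNReal.ofReal_le_ofReal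
                  rw [Real.rpow_neg hr0.le, Real.rpow_neg (norm_nonneg x)]
                  exact inv_anti₀ (Real.rpow_pos_of_pos hr0 β) (Real.rpow_le_rpow hr0.le hxr hβ0)
              _ = ENNReal.ofReal (r ^ (-β)) * volume (E \ Metric.ball (0:X) r) := by
                  rw [setLIntegral_const]
      _ ≤ ENNReal.ofReal (P ^ η) * ENNReal.ofReal S.toReal
          + ENNReal.ofReal (r ^ (-β)) * ENNReal.ofReal (2 ^ d * P) := by
          have e : ENNReal.ofReal (r ^ ((d:ℝ) - β)) * S
              = ENNReal.ofReal (P ^ η) * ENNReal.ofReal S.toReal := by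
            rw [hrδ, ENNReal.ofReal_toReal hStop]
          rw [e]
          gcongr
          exact (measure_mono Set.diff_subset).trans hEvol
      _ = ENNReal.ofReal (P ^ η * S.toReal) + ENNReal.ofReal (r ^ (-β) * (2 ^ d * P)) := by
          rw [← ENNReal.ofReal_mul (Real.rpow_nonneg hP0.le _),
              ← ENNReal.ofReal_mul (Real.rpow_nonneg hr0.le _)]
      _ ≤ ENNReal.ofReal (P ^ η * S.toReal) + ENNReal.ofReal (2 ^ d * P ^ η) :=
          add_le_add_right (ENNReal.ofReal_le_ofReal hrβ) _
      _ = ENNReal.ofReal (P ^ η * S.toReal + 2 ^ d * P ^ η) := by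
          rw [← ENNReal.ofReal_add (by positivity) (by positivity)]
      _ = ENNReal.ofReal ((S.toReal + 2 ^ d) * P ^ η) := by
          congr 1
          ring
  exact ENNReal.toReal_le_of_le_ofReal (by positivity) hlint
end
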